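/- arXiv:1909.08193 — 3 statements merged into one kernel-verified Lean document; each statement's English description precedes it below -/
import Mathlib

section
/- Let f : ℕ → ℝ be an additive number-theoretical function, i.e. f(mn) = f(m) + f(n) for all positive integers m, n, and suppose that lim_{n→∞} (f(n+1) − f(n)) = 0. Then there exists a constant c ∈ ℝ such that f(n) = c · log n for all positive integers n. -/
/-!
Fix `a ≥ 2` and put `c = f a / log a`. Then `g = f - c log` is again additive, has vanishing
increments, and satisfies `g (a q) = g q`. Writing `n = a q + r` with `r < a`, the increments give
`|g n - g q| ≤ (a - 1) ε` for large `n`; iterating along the base-`a` expansion of `n` costs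
`logb a n` steps, so `|g n| ≤ C + (a - 1) ε logb a n` for every `ε > 0`, i.e. `g = o(log)`.
Hence `f n / log n → f a / log a` for every `a ≥ 2`, and all these limits coincide.
-/

open Filter Real Topology Asymptotics

lemma abs_sub_le_of_abs_succ_sub_le {g : ℕ → ℝ} {N : ℕ} {ε : ℝ}
    (hstep : ∀ m, N ≤ m → |g (m + 1) - g m| ≤ ε) {s t : ℕ} (hs : N ≤ s) (hst : s ≤ t) :
    |g t - g s| ≤ (t - s : ℕ) * ε := by
  calc |g t - g s| = dist (g s) (g t) := by rw [Real.dist_eq, abs_sub_comm]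
    _ ≤ ∑ i ∈ Finset.Ico s t, dist (g i) (g (i + 1)) := dist_le_Ico_sum_dist g hst
    _ ≤ (Finset.Ico s t).card • ε := Finset.sum_le_card_nsmul _ _ _ fun i hi => by
        rw [Real.dist_eq, abs_sub_comm]
        exact hstep i (hs.trans (Finset.mem_Ico.1 hi).1)
    _ = (t - s : ℕ) * ε := by rw [Nat.card_Ico, nsmul_eq_mul]

lemma exists_abs_le_add_mul_logb {g : ℕ → ℝ} {a N : ℕ} {ε : ℝ} (ha : 2 ≤ a)
    (hmul : ∀ q, 0 < q → g (a * q) = g q) (hstep : ∀ m, N ≤ m → |g (m + 1) - g m| ≤ ε) :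
    ∃ C, ∀ n, 0 < n → |g n| ≤ C + (a - 1) * ε * logb a n := by
  have ha1 : (1 : ℝ) < a := by exact_mod_cast ha
  have hε : 0 ≤ ε := (abs_nonneg _).trans (hstep N le_rfl)
  have hδ : 0 ≤ ((a : ℝ) - 1) * ε := mul_nonneg (by linarith) hε
  refine ⟨∑ m ∈ Finset.range (N + a), |g m|, fun n => ?_⟩
  induction n using Nat.strong_induction_on with
  | _ n ih =>
  intro hn
  by_cases hsmall : n < N + a
  · have hlogb : 0 ≤ logb a n := logb_nonneg ha1 (by exact_mod_cast hn)
    have := Finset.single_le_sum (fun m _ => abs_nonneg (g m)) (Finset.mem_range.2 hsmall)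
    linarith [mul_nonneg hδ hlogb]
  have hdiv := Nat.div_add_mod n a
  have hmod := Nat.mod_lt n (show 0 < a by omega)
  set q := n / a
  have hq : 0 < q := Nat.div_pos (by omega) (by omega)
  have haq : a * q ≤ n := by omega
  have hnear : |g n - g q| ≤ (a - 1) * ε := by
    rw [← hmul q hq]
    calc _ ≤ (n - a * q : ℕ) * ε := abs_sub_le_of_abs_succ_sub_le hstep (by omega) haq
      _ ≤ (a - 1 : ℕ) * ε := mul_le_mul_of_nonneg_right (by exact_mod_cast (by omega)) hε
      _ = (a - 1) * ε := by rw [Nat.cast_sub (by omega), Nat.cast_one]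
  have hlogb : 1 + logb a q ≤ logb a n := by
    calc 1 + logb a q = logb a (a * q : ℕ) := by
          push_cast
          rw [logb_mul (by positivity) (by positivity), logb_self_eq_one ha1]
      _ ≤ logb a n := logb_le_logb_of_le ha1 (by positivity) (by exact_mod_cast haq)
  have hgq := ih q (Nat.div_lt_self hn (by omega)) hq
  linarith [abs_sub_abs_le_abs_sub (g n) (g q), mul_le_mul_of_nonneg_left hlogb hδ]

lemma isLittleO_log_of_forall_exists_bound {g : ℕ → ℝ}
    (h : ∀ η > 0, ∃ C, ∀ n, 0 < n → |g n| ≤ C + η * log n) :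
    g =o[atTop] fun n => log n := by
  refine isLittleO_iff.2 fun η hη => ?_
  obtain ⟨C, hC⟩ := h (η / 2) (half_pos hη)
  have hlog := (tendsto_log_atTop.comp tendsto_natCast_atTop_atTop).eventually_ge_atTop (2 * C / η)
  filter_upwards [hlog, eventually_gt_atTop 0] with n hlarge hn
  have hlogn : 0 ≤ log n := log_natCast_nonneg n
  rw [Function.comp_apply, div_le_iff₀ hη] at hlarge
  rw [Real.norm_eq_abs, Real.norm_eq_abs, abs_of_nonneg hlogn]
  linarith [hC n hn]

lemma isLittleO_log_of_mul_invariant {g : ℕ → ℝ} {a : ℕ} (ha : 2 ≤ a)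
    (hmul : ∀ q, 0 < q → g (a * q) = g q)
    (hlim : Tendsto (fun n => g (n + 1) - g n) atTop (𝓝 0)) :
    g =o[atTop] fun n => log n := by
  have ha1 : (1 : ℝ) < a := by exact_mod_cast ha
  have hloga : 0 < log a := log_pos ha1
  refine isLittleO_log_of_forall_exists_bound fun η hη => ?_
  have hε : 0 < η * log a / (a - 1) := div_pos (by positivity) (by linarith)
  obtain ⟨N, hN⟩ := Metric.tendsto_atTop.1 hlim _ hε
  obtain ⟨C, hC⟩ := exists_abs_le_add_mul_logb ha hmul fun m hm => by
    simpa [Real.dist_eq] using (hN m hm).le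
  refine ⟨C, fun n hn => (hC n hn).trans_eq ?_⟩
  rw [← log_div_log]
  field_simp [(by linarith : (a : ℝ) - 1 ≠ 0)]

lemma tendsto_div_log_of_additive {f : ℕ → ℝ}
    (hadd : ∀ m n : ℕ, 0 < m → 0 < n → f (m * n) = f m + f n)
    (hlim : Tendsto (fun n : ℕ => f (n + 1) - f n) atTop (𝓝 0)) {a : ℕ} (ha : 2 ≤ a) :
    Tendsto (fun n : ℕ => f n / log n) atTop (𝓝 (f a / log a)) := by
  set c := f a / log a
  have hloga : log a ≠ 0 := (log_pos (by exact_mod_cast ha)).ne'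
  set g := fun n : ℕ => f n - c * log n
  have hmul : ∀ q, 0 < q → g (a * q) = g q := by
    intro q hq
    simp only [g, c]
    rw [hadd a q (by omega) hq, Nat.cast_mul, log_mul (by positivity) (by positivity)]
    field_simp
    ring
  have hg : Tendsto (fun n => g (n + 1) - g n) atTop (𝓝 0) := by
    have := hlim.sub (tendsto_log_nat_add_one_sub_log.const_mul c)
    rw [mul_zero, sub_zero] at this
    refine this.congr fun n => ?_
    simp only [g]
    push_cast
    ring
  have := ((isLittleO_log_of_mul_invariant ha hmul hg).tendsto_div_nhds_zero).add_const c
  rw [zero_add] at this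
  refine this.congr' ?_
  filter_upwards [eventually_ge_atTop 2] with n hn
  have hlogn : log n ≠ 0 := (log_pos (by exact_mod_cast hn)).ne'
  simp only [g]
  field_simp
  ring

/-- If `f : ℕ → ℝ` is an additive number-theoretical function, i.e.
`f (m * n) = f m + f n` for all positive integers `m, n`, and
`f (n + 1) - f n → 0` as `n → ∞`, then there is a constant `c` with
`f n = c * log n` for all positive `n`. -/
theorem erdos_additive_characterization_of_log
    (f : ℕ → ℝ)
    (hadd : ∀ m n : ℕ, 0 < m → 0 < n → f (m * n) = f m + f n)
    (hlim : Filter.Tendsto (fun n : ℕ => f (n + 1) - f n) Filter.atTop (nhds 0)) :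
    ∃ c : ℝ, ∀ n : ℕ, 0 < n → f n = c * Real.log n := by
  refine ⟨f 2 / log (2 : ℕ), fun n hn => ?_⟩
  obtain rfl | hn2 : n = 1 ∨ 2 ≤ n := by omega
  · simpa using hadd 1 1 one_pos one_pos
  · have hlogn : log n ≠ 0 := (log_pos (by exact_mod_cast hn2)).ne'
    rw [← tendsto_nhds_unique (tendsto_div_log_of_additive hadd hlim hn2)
      (tendsto_div_log_of_additive hadd hlim le_rfl)]
    field_simp
end

section
/- Let F : ℕ → ℝ × ℝ (viewing the hyperbolic numbers 𝔻 = ℝe₁ + ℝe₂ in idempotent representation as pairs of real numbers with componentwise addition and multiplication) satisfy F(mn) = F(m) + F(n) for all positive integers m, n, and suppose that lim_{n→∞} (F(n+1) − F(n)) = (0,0). Then there exists κ = (c₁, c₂) ∈ ℝ × ℝ such that F(n) = κ · Log_𝔻(n) for all positive integers n, where Log_𝔻(n) = (log n, log n) is the hyperbolic logarithm of the real number n embedded in 𝔻, and the product κ · Log_𝔻(n) = (c₁ log n, c₂ log n) is componentwise. -/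
/-!
With `c = f 2 / log 2`, the function `g n = f n - c log n` is again completely additive, has
consecutive differences tending to `0`, and vanishes at `2`. Then `g n - g (n / 2)` tends to `0`
(it is `0` for even `n` and a consecutive difference for odd `n`), and telescoping along the
base-`2` digits gives `g n = o(log n)`. Since `g (n ^ j) = j g n` while `log (n ^ j) = j log n`,
this forces `g n = 0`. The hyperbolic statement is this real one in each idempotent component.
-/

open Filter Asymptotics Topology

def IsCompletelyAdditive {M : Type*} [Add M] (g : ℕ → M) : Prop :=
  ∀ m n : ℕ, 0 < m → 0 < n → g (m * n) = g m + g n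

namespace IsCompletelyAdditive

variable {g : ℕ → ℝ}

lemma map_one (hg : IsCompletelyAdditive g) : g 1 = 0 := by
  have := hg 1 1 one_pos one_pos
  rw [mul_one] at this
  linarith

lemma map_pow (hg : IsCompletelyAdditive g) {n : ℕ} (hn : 0 < n) (j : ℕ) :
    g (n ^ j) = j * g n := by
  induction j with
  | zero => simp [hg.map_one]
  | succ j ih =>
    rw [pow_succ, hg _ _ (pow_pos hn j) hn, ih]
    push_cast
    ring

lemma sub_mul_log (hg : IsCompletelyAdditive g) (c : ℝ) :
    IsCompletelyAdditive fun n => g n - c * Real.log n := by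
  intro m n hm hn
  simp only
  rw [hg m n hm hn, Nat.cast_mul, Real.log_mul (by positivity) (by positivity)]
  ring

lemma tendsto_sub_div_two (hg : IsCompletelyAdditive g) (h2 : g 2 = 0)
    (hd : Tendsto (fun n => g (n + 1) - g n) atTop (𝓝 0)) :
    Tendsto (fun n => g n - g (n / 2)) atTop (𝓝 0) := by
  have hdouble : ∀ m, g (2 * m) = g m := by
    intro m
    rcases m.eq_zero_or_pos with rfl | hm
    · rfl
    · rw [hg 2 m two_pos hm, h2, zero_add]
  refine squeeze_zero_norm (a := fun n => ‖g (n - 1 + 1) - g (n - 1)‖) (fun n => ?_) ?_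
  · obtain ⟨m, rfl | rfl⟩ := Nat.even_or_odd' n
    · simp [hdouble]
    · have hdiv : (2 * m + 1) / 2 = m := by omega
      rw [hdiv, Nat.add_sub_cancel, ← hdouble m]
  · simpa using (hd.comp (tendsto_sub_atTop_nat 1)).norm

end IsCompletelyAdditive

section Telescoping

variable {g : ℕ → ℝ} {b : ℕ}

lemma exists_abs_le_mul_natLog_add {N : ℕ} {ε : ℝ} (hb : 1 < b) (hN : b ≤ N)
    (h : ∀ n, N ≤ n → |g n - g (n / b)| ≤ ε) :
    ∃ K, ∀ n, |g n| ≤ ε * Nat.log b n + K := by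
  have hε : 0 ≤ ε := (abs_nonneg _).trans (h N le_rfl)
  refine ⟨∑ m ∈ Finset.range N, |g m|, fun n => ?_⟩
  induction n using Nat.strong_induction_on with
  | _ n ih =>
    rcases lt_or_ge n N with hn | hn
    · have hle : |g n| ≤ ∑ m ∈ Finset.range N, |g m| :=
        Finset.single_le_sum (f := fun m => |g m|) (fun m _ => abs_nonneg (g m))
          (Finset.mem_range.2 hn)
      have : 0 ≤ ε * Nat.log b n := by positivity
      linarith
    · have hlog : (Nat.log b n : ℝ) = Nat.log b (n / b) + 1 := by
        have := Nat.log_pos hb (hN.trans hn)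
        rw [Nat.log_div_base]
        norm_cast
        omega
      have ih' := ih (n / b) (Nat.div_lt_self (by omega) hb)
      have hstep := abs_sub_abs_le_abs_sub (g n) (g (n / b))
      rw [hlog]
      linarith [h n hn]

lemma isLittleO_log_of_tendsto_sub_div (hb : 1 < b)
    (h : Tendsto (fun n => g n - g (n / b)) atTop (𝓝 0)) :
    g =o[atTop] fun n => Real.log n := by
  refine IsLittleO.of_bound fun c hc => ?_
  have hlogb : 0 < Real.log b := Real.log_pos (by exact_mod_cast hb)
  obtain ⟨N₀, hN₀⟩ := Metric.tendsto_atTop.1 h (c * Real.log b / 2) (by positivity)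
  obtain ⟨K, hK⟩ := exists_abs_le_mul_natLog_add (g := g) hb (le_max_right N₀ b)
    fun n hn => by simpa [Real.dist_eq] using (hN₀ n (le_of_max_le_left hn)).le
  have hlarge : ∀ᶠ n : ℕ in atTop, K ≤ c / 2 * Real.log n :=
    ((Real.tendsto_log_atTop.comp tendsto_natCast_atTop_atTop).const_mul_atTop
      (by positivity)).eventually_ge_atTop K
  filter_upwards [hlarge] with n hn
  have hnatLog : (Nat.log b n : ℝ) * Real.log b ≤ Real.log n := by
    have := Real.natLog_le_logb n b
    rwa [Real.logb, le_div_iff₀ hlogb] at this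
  rw [Real.norm_eq_abs, Real.norm_of_nonneg (Real.log_natCast_nonneg n)]
  have := mul_le_mul_of_nonneg_left hnatLog (half_pos hc).le
  linarith [hK n]

end Telescoping

namespace IsCompletelyAdditive

variable {g : ℕ → ℝ}

lemma eq_zero_of_isLittleO_log (hg : IsCompletelyAdditive g)
    (ho : g =o[atTop] fun n => Real.log n) {n : ℕ} (hn : 0 < n) : g n = 0 := by
  rcases (Nat.one_le_iff_ne_zero.2 hn.ne').eq_or_lt with rfl | hn1
  · exact hg.map_one
  have hlog : Real.log n ≠ 0 := (Real.log_pos (by exact_mod_cast hn1)).ne'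
  have hpow : (fun j : ℕ => (j : ℝ) * g n) =o[atTop] fun j => (j : ℝ) * Real.log n := by
    simpa only [Function.comp_def, hg.map_pow hn, Nat.cast_pow, Real.log_pow] using
      ho.comp_tendsto (tendsto_pow_atTop_atTop_of_one_lt hn1)
  have hratio : (fun j : ℕ => (j : ℝ) * g n / ((j : ℝ) * Real.log n))
      =ᶠ[atTop] fun _ => g n / Real.log n := by
    filter_upwards [eventually_ne_atTop 0] with j hj
    rw [mul_div_mul_left _ _ (Nat.cast_ne_zero.2 hj)]
  have := tendsto_nhds_unique (hpow.tendsto_div_nhds_zero.congr' hratio) tendsto_const_nhds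
  simpa [hlog] using this.symm

theorem exists_eq_mul_log (hg : IsCompletelyAdditive g)
    (hd : Tendsto (fun n => g (n + 1) - g n) atTop (𝓝 0)) :
    ∃ c : ℝ, ∀ n, 0 < n → g n = c * Real.log n := by
  set c := g 2 / Real.log 2
  have hsub := hg.sub_mul_log c
  have hsub_two : g 2 - c * Real.log (2 : ℕ) = 0 := by
    have : Real.log 2 ≠ 0 := (Real.log_pos one_lt_two).ne'
    rw [Nat.cast_ofNat, div_mul_cancel₀ _ this, sub_self]
  have hsub_diff : Tendsto (fun n : ℕ => (g (n + 1) - c * Real.log ↑(n + 1)) - (g n - c * Real.log n))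
      atTop (𝓝 0) := by
    simpa [Nat.cast_add_one, mul_sub] using
      (hd.sub (Real.tendsto_log_nat_add_one_sub_log.const_mul c)).congr fun n => by ring
  have ho := isLittleO_log_of_tendsto_sub_div one_lt_two (hsub.tendsto_sub_div_two hsub_two hsub_diff)
  exact ⟨c, fun n hn => sub_eq_zero.1 (hsub.eq_zero_of_isLittleO_log ho hn)⟩

end IsCompletelyAdditive

/-- Hyperbolic version of Erdős' lemma.  The hyperbolic numbers `𝔻` are
identified with `ℝ × ℝ` in the idempotent representation, with
componentwise addition and multiplication.  If `F : ℕ → ℝ × ℝ` satisfies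
`F (m * n) = F m + F n` for positive `m, n`, and `F (n + 1) - F n → (0, 0)`,
then there is `κ = (c₁, c₂) ∈ ℝ × ℝ` such that
`F n = κ * Log_𝔻 n = (c₁ * log n, c₂ * log n)` for all positive `n`. -/
theorem hyperbolic_erdos_additive_characterization_of_log
    (F : ℕ → ℝ × ℝ)
    (hadd : ∀ m n : ℕ, 0 < m → 0 < n → F (m * n) = F m + F n)
    (hlim : Filter.Tendsto (fun n : ℕ => F (n + 1) - F n) Filter.atTop
      (nhds ((0 : ℝ), (0 : ℝ)))) :
    ∃ κ : ℝ × ℝ, ∀ n : ℕ, 0 < n →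
      F n = (κ.1 * Real.log n, κ.2 * Real.log n) := by
  obtain ⟨c₁, h₁⟩ := IsCompletelyAdditive.exists_eq_mul_log (g := fun n => (F n).1)
    (fun m n hm hn => congrArg Prod.fst (hadd m n hm hn)) (by simpa using hlim.fst_nhds)
  obtain ⟨c₂, h₂⟩ := IsCompletelyAdditive.exists_eq_mul_log (g := fun n => (F n).2)
    (fun m n hm hn => congrArg Prod.snd (hadd m n hm hn)) (by simpa using hlim.snd_nhds)
  exact ⟨(c₁, c₂), fun n hn => Prod.ext (h₁ n hn) (h₂ n hn)⟩
end

section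
/- Let n ≥ 1 and let p, q : Fin n → ℝ satisfy p(k) ≥ 0, q(k) ≥ 0 for all k, Σ_k p(k) = 1, and Σ_k q(k) = 1. Define the hyperbolic probability distribution 𝔎 on Fin n × Fin n by ω(s,t) = (p(s)/n, q(t)/n) ∈ ℝ × ℝ. Then its strong hyperbolic entropy H_s(𝔎) = Σ_{(s,t)} ( −(p(s)/n) · log(p(s)/n), −(q(t)/n) · log(q(t)/n) ) equals (H₁ + log n, H₂ + log n), where H₁ = Σ_s −p(s) log p(s) and H₂ = Σ_t −q(t) log q(t); in particular H_s(𝔓) = (H₁, H₂) ⪯ H_s(𝔎) in the componentwise partial order on 𝔻 = ℝ × ℝ. -/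
/-! Each `p s / n` occurs `n` times among the pairs, and `negMulLog (x / n) = (negMulLog x + x log n) / n`;
summing against `∑ p = 1` adds exactly `log n`, which is nonnegative. -/

open Real Finset

section

variable {ι κ : Type*} [Fintype ι] [Fintype κ]

theorem sum_negMulLog_div_of_sum_eq_one {p : ι → ℝ} (hp : ∑ i, p i = 1) {c : ℝ} (hc : c ≠ 0) :
    c * ∑ i, negMulLog (p i / c) = ∑ i, negMulLog (p i) + log c := by
  have hterm : ∀ i, c * negMulLog (p i / c) = negMulLog (p i) + p i * log c := fun i => by
    rw [div_eq_mul_inv, negMulLog_mul]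
    simp only [negMulLog, log_inv]
    field_simp
  rw [mul_sum, sum_congr rfl fun i _ => hterm i, sum_add_distrib, ← sum_mul, hp, one_mul]

variable [Nonempty κ]

theorem sum_prod_negMulLog_fst_div_card {p : ι → ℝ} (hp : ∑ i, p i = 1) :
    ∑ m : ι × κ, negMulLog (p m.1 / Fintype.card κ) =
      ∑ i, negMulLog (p i) + log (Fintype.card κ) := by
  rw [Fintype.sum_prod_type, ← sum_negMulLog_div_of_sum_eq_one hp (by simp)]
  simp only [sum_const, card_univ, nsmul_eq_mul, mul_sum]

theorem sum_prod_negMulLog_snd_div_card {q : ι → ℝ} (hq : ∑ i, q i = 1) :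
    ∑ m : κ × ι, negMulLog (q m.2 / Fintype.card κ) =
      ∑ i, negMulLog (q i) + log (Fintype.card κ) := by
  rw [Fintype.sum_prod_type_right, ← sum_negMulLog_div_of_sum_eq_one hq (by simp)]
  simp only [sum_const, card_univ, nsmul_eq_mul, mul_sum]

end

theorem strong_hyperbolic_entropy_of_K_general
    (n : ℕ) (p q : Fin n → ℝ)
    (hpsum : ∑ k, p k = 1) (hqsum : ∑ k, q k = 1) :
    (∑ m : Fin n × Fin n, -((p m.1 / n) * Real.log (p m.1 / n))) =
      (∑ s, -(p s * Real.log (p s))) + Real.log n ∧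
    (∑ m : Fin n × Fin n, -((q m.2 / n) * Real.log (q m.2 / n))) =
      (∑ t, -(q t * Real.log (q t))) + Real.log n ∧
    (∑ s, -(p s * Real.log (p s))) ≤
      (∑ m : Fin n × Fin n, -((p m.1 / n) * Real.log (p m.1 / n))) ∧
    (∑ t, -(q t * Real.log (q t))) ≤
      (∑ m : Fin n × Fin n, -((q m.2 / n) * Real.log (q m.2 / n))) := by
  have : Nonempty (Fin n) :=
    univ_nonempty_iff.1 (nonempty_of_sum_ne_zero (hpsum ▸ one_ne_zero))
  have hP := sum_prod_negMulLog_fst_div_card (κ := Fin n) hpsum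
  have hQ := sum_prod_negMulLog_snd_div_card (κ := Fin n) hqsum
  simp only [Fintype.card_fin, negMulLog, neg_mul] at hP hQ
  refine ⟨hP, hQ, ?_, ?_⟩ <;> linarith [log_natCast_nonneg n]

/-- The strong hyperbolic entropy of the hyperbolic probability
distribution `𝔎` on the `n²` pairs, `ω (s, t) = (p s / n, q t / n)`,
equals `(H₁ + log n, H₂ + log n)`, where `(H₁, H₂) = H_s(𝔓)`; in
particular `H_s(𝔓) ⪯ H_s(𝔎)` in the componentwise order on
`𝔻 ≅ ℝ × ℝ`. -/
theorem strong_hyperbolic_entropy_of_K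
    (n : ℕ) (hn : 1 ≤ n) (p q : Fin n → ℝ)
    (hp : ∀ k, 0 ≤ p k) (hq : ∀ k, 0 ≤ q k)
    (hpsum : ∑ k, p k = 1) (hqsum : ∑ k, q k = 1) :
    (∑ m : Fin n × Fin n, -((p m.1 / n) * Real.log (p m.1 / n))) =
      (∑ s, -(p s * Real.log (p s))) + Real.log n ∧
    (∑ m : Fin n × Fin n, -((q m.2 / n) * Real.log (q m.2 / n))) =
      (∑ t, -(q t * Real.log (q t))) + Real.log n ∧
    (∑ s, -(p s * Real.log (p s))) ≤
      (∑ m : Fin n × Fin n, -((p m.1 / n) * Real.log (p m.1 / n))) ∧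
    (∑ t, -(q t * Real.log (q t))) ≤
      (∑ m : Fin n × Fin n, -((q m.2 / n) * Real.log (q m.2 / n))) :=
  strong_hyperbolic_entropy_of_K_general n p q hpsum hqsum
end
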